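/- Let I > 1, M ≥ 1 with K divisible by M, and assume the feasible set is nonempty. Let p* be the unique optimal solution of the original central problem: minimize ∑_{i=1}^I ∑_{k=1}^K c_i^k(p_i^k)² + ∑_i (D_i − ∑_k p_i^k)²/(2a(I−1)) over p ∈ ℝ^{I×K} subject to (D_i − ∑_k p_i^k)_i ∈ Y. Define the equal partition: each prosumer i is split into M prosumers located at the same bus, where copy m owns resources j ∈ {(m−1)K/M + 1, …, mK/M} and has demand D_i^m := ∑_{j=(m−1)K/M+1}^{mK/M} p_i^{j*} − (1/M)(∑_{k=1}^K p_i^{k*} − D_i). Let p** be the unique optimal solution of the partitioned central problem: minimize ∑_i ∑_{m=1}^M ∑_{j∈block m} c_i^j(p_i^j)² + ∑_i ∑_m (D_i^m − ∑_{j∈block m} p_i^j)²/(2a(MI−1)) over p ∈ ℝ^{I×K}, subject to ∑_i ∑_k p_i^k = ∑_i ∑_m D_i^m and −F_l ≤ ∑_i π_{il}(∑_m D_i^m − ∑_k p_i^k) ≤ F_l for all l. Then the total disutility does not increase: ∑_i ∑_k c_i^k (p_i^{k**})² ≤ ∑_i ∑_k c_i^k (p_i^{k*})². -/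

import Mathlib

open Finset

noncomputable section

/-- The resources owned by the `m`-th copy of a prosumer after its `K` resources are split into
`M` equal blocks of size `K / M` (`0`-indexed: block `m` is `{j : j / (K/M) = m}`). -/
def resBlock (K M : ℕ) (m : Fin M) : Finset (Fin K) :=
  Finset.univ.filter fun j => (j : ℕ) / (K / M) = (m : ℕ)

lemma blockSum {M K : ℕ} (hM : 1 ≤ M) (hK : 1 ≤ K) (hdvd : M ∣ K) (f : Fin K → ℝ) :
    ∑ m : Fin M, ∑ j ∈ resBlock K M m, f j = ∑ j, f j := by
  have hq : 0 < K / M := Nat.div_pos (Nat.le_of_dvd hK hdvd) hM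
  have hMK : M * (K / M) = K := Nat.mul_div_cancel' hdvd
  have hg : ∀ j : Fin K, (j : ℕ) / (K / M) < M := by
    intro j
    rw [Nat.div_lt_iff_lt_mul hq]
    have := j.isLt
    omega
  have hb : ∀ m : Fin M, resBlock K M m
      = Finset.univ.filter fun j : Fin K => (⟨(j : ℕ) / (K / M), hg j⟩ : Fin M) = m := by
    intro m
    apply Finset.filter_congr
    intro j _
    simp [Fin.ext_iff]
  simp_rw [hb]
  exact Finset.sum_fiberwise _ _ _

/-- Total disutility `∑_i ∑_k c_i^k (p_i^k)^2`. -/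
def totalF (I K : ℕ) (c : Fin I → Fin K → ℝ) (p : Fin I → Fin K → ℝ) : ℝ :=
  ∑ i, ∑ k, c i k * p i k ^ 2

/-- Feasibility of the original central problem: total balance plus line flow limits. -/
def OrigFeas (I K L : ℕ) (D : Fin I → ℝ) (ptdf : Fin I → Fin L → ℝ) (F : Fin L → ℝ)
    (p : Fin I → Fin K → ℝ) : Prop :=
  (∑ i, ∑ k, p i k = ∑ i, D i) ∧
    ∀ l, |∑ i, ptdf i l * (D i - ∑ k, p i k)| ≤ F l

/-- Objective of the original central problem (penalty coefficient `1/(2a(I-1))`). -/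
def OrigObj (I K : ℕ) (a : ℝ) (c : Fin I → Fin K → ℝ) (D : Fin I → ℝ)
    (p : Fin I → Fin K → ℝ) : ℝ :=
  totalF I K c p + ∑ i, (D i - ∑ k, p i k) ^ 2 / (2 * a * ((I : ℝ) - 1))

/-- Feasibility of the partitioned central problem with demands `Dm i m`. -/
def PartFeas (I K L M : ℕ) (Dm : Fin I → Fin M → ℝ) (ptdf : Fin I → Fin L → ℝ)
    (F : Fin L → ℝ) (p : Fin I → Fin K → ℝ) : Prop :=
  (∑ i, ∑ k, p i k = ∑ i, ∑ m, Dm i m) ∧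
    ∀ l, |∑ i, ptdf i l * ((∑ m, Dm i m) - ∑ k, p i k)| ≤ F l

/-- Objective of the partitioned central problem: after the equal partition there are `M * I`
prosumers, each owning one block of `K / M` resources, so the penalty coefficient becomes
`1/(2a(MI-1))`. -/
def PartObj (I K M : ℕ) (a : ℝ) (c : Fin I → Fin K → ℝ) (Dm : Fin I → Fin M → ℝ)
    (p : Fin I → Fin K → ℝ) : ℝ :=
  totalF I K c p +
    ∑ i, ∑ m, (Dm i m - ∑ j ∈ resBlock K M m, p i j) ^ 2 /
      (2 * a * ((M : ℝ) * (I : ℝ) - 1))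

/-- Introducing competition by equally partitioning each prosumer (splitting
its `K` resources into `M` blocks and its demand according to the equilibrium net injections)
does not increase the total disutility at the resulting sharing-market equilibrium:
`totalF p** ≤ totalF p*`. -/
theorem stmt_16 (I K L M : ℕ) (hI : 1 < I) (hM : 1 ≤ M) (hK : 1 ≤ K) (hdvd : M ∣ K)
    (a : ℝ) (ha : 0 < a) (c : Fin I → Fin K → ℝ) (hc : ∀ i k, 0 < c i k)
    (D : Fin I → ℝ) (ptdf : Fin I → Fin L → ℝ) (F : Fin L → ℝ) (hF : ∀ l, 0 ≤ F l)
    (hne : ∃ p, OrigFeas I K L D ptdf F p)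
    -- `p*` is the unique optimal solution of the original central problem
    (pstar : Fin I → Fin K → ℝ)
    (hstar : OrigFeas I K L D ptdf F pstar ∧
      ∀ p, OrigFeas I K L D ptdf F p → OrigObj I K a c D pstar ≤ OrigObj I K a c D p)
    (hstaru : ∀ p, OrigFeas I K L D ptdf F p ∧
      (∀ p', OrigFeas I K L D ptdf F p' → OrigObj I K a c D p ≤ OrigObj I K a c D p') →
      p = pstar)
    -- demands of the equal partition
    (Dm : Fin I → Fin M → ℝ)
    (hDm : ∀ i m, Dm i m =
      ∑ j ∈ resBlock K M m, pstar i j - (1 / (M : ℝ)) * ((∑ k, pstar i k) - D i))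
    -- `p**` is the unique optimal solution of the partitioned central problem
    (pss : Fin I → Fin K → ℝ)
    (hss : PartFeas I K L M Dm ptdf F pss ∧
      ∀ p, PartFeas I K L M Dm ptdf F p →
        PartObj I K M a c Dm pss ≤ PartObj I K M a c Dm p)
    (hssu : ∀ p, PartFeas I K L M Dm ptdf F p ∧
      (∀ p', PartFeas I K L M Dm ptdf F p' →
        PartObj I K M a c Dm p ≤ PartObj I K M a c Dm p') →
      p = pss) :
    totalF I K c pss ≤ totalF I K c pstar := by
  classical
  have hM1 : (1 : ℝ) ≤ (M : ℝ) := by exact_mod_cast hM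
  have hM0 : ((M : ℝ)) ≠ 0 := by linarith
  have hI2 : (2 : ℝ) ≤ (I : ℝ) := by exact_mod_cast hI
  set A : ℝ := 2 * a * ((I : ℝ) - 1) with hA_def
  set B : ℝ := 2 * a * ((M : ℝ) * (I : ℝ) - 1) with hB_def
  have hA : 0 < A := by
    have h1 : (0 : ℝ) < (I : ℝ) - 1 := by linarith
    rw [hA_def]; positivity
  have hB : 0 < B := by
    have h1 : (0 : ℝ) < (M : ℝ) * (I : ℝ) - 1 := by nlinarith
    rw [hB_def]; positivity
  -- the split demands sum back to the original demand
  have hDsum : ∀ i, ∑ m, Dm i m = D i := by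
    intro i
    have h1 : ∑ m, Dm i m
        = (∑ m : Fin M, ∑ j ∈ resBlock K M m, pstar i j)
          - ∑ m : Fin M, (1 / (M : ℝ)) * ((∑ k, pstar i k) - D i) := by
      rw [← Finset.sum_sub_distrib]
      exact Finset.sum_congr rfl fun m _ => hDm i m
    rw [h1, blockSum hM hK hdvd, Finset.sum_const, Finset.card_univ, Fintype.card_fin,
      nsmul_eq_mul]
    field_simp
    ring
  -- feasible sets coincide
  have hfeq : ∀ p, PartFeas I K L M Dm ptdf F p ↔ OrigFeas I K L D ptdf F p := by
    intro p
    unfold PartFeas OrigFeas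
    simp only [hDsum]
  -- OrigObj rewritten
  have horig : ∀ p, OrigObj I K a c D p
      = totalF I K c p + (∑ i, (D i - ∑ k, p i k) ^ 2) / A := by
    intro p
    unfold OrigObj
    rw [Finset.sum_div, hA_def]
  -- lower bound on the partitioned penalty (Cauchy–Schwarz)
  have hlow : ∀ p, totalF I K c p + (∑ i, (D i - ∑ k, p i k) ^ 2) / ((M : ℝ) * B)
      ≤ PartObj I K M a c Dm p := by
    intro p
    unfold PartObj
    rw [← hB_def]
    have key : ∀ i, (D i - ∑ k, p i k) ^ 2 / ((M : ℝ) * B)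
        ≤ ∑ m, (Dm i m - ∑ j ∈ resBlock K M m, p i j) ^ 2 / B := by
      intro i
      have hsum : ∑ m, (Dm i m - ∑ j ∈ resBlock K M m, p i j)
          = D i - ∑ k, p i k := by
        rw [Finset.sum_sub_distrib, blockSum hM hK hdvd, hDsum]
      have hcs := sq_sum_le_card_mul_sum_sq (s := (Finset.univ : Finset (Fin M)))
        (f := fun m => Dm i m - ∑ j ∈ resBlock K M m, p i j)
      rw [hsum, Finset.card_univ, Fintype.card_fin] at hcs
      rw [← Finset.sum_div, div_le_div_iff₀ (by positivity) hB]
      calc (D i - ∑ k, p i k) ^ 2 * B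
          ≤ ((M : ℝ) * ∑ m, (Dm i m - ∑ j ∈ resBlock K M m, p i j) ^ 2) * B :=
            mul_le_mul_of_nonneg_right hcs hB.le
        _ = (∑ m, (Dm i m - ∑ j ∈ resBlock K M m, p i j) ^ 2) * ((M : ℝ) * B) := by
            ring
    have h2 := Finset.sum_le_sum fun i (_ : i ∈ Finset.univ) => key i
    rw [← Finset.sum_div] at h2
    linarith
  -- value of the partitioned penalty at pstar
  have hpstarObj : PartObj I K M a c Dm pstar
      = totalF I K c pstar + (∑ i, (D i - ∑ k, pstar i k) ^ 2) / ((M : ℝ) * B) := by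
    unfold PartObj
    rw [← hB_def]
    congr 1
    rw [Finset.sum_div]
    apply Finset.sum_congr rfl
    intro i _
    have hterm : ∀ m : Fin M, (Dm i m - ∑ j ∈ resBlock K M m, pstar i j) ^ 2 / B
        = (1 / (M : ℝ)) ^ 2 * (D i - ∑ k, pstar i k) ^ 2 / B := by
      intro m
      rw [hDm i m]
      ring_nf
    rw [Finset.sum_congr rfl fun m _ => hterm m, Finset.sum_const, Finset.card_univ,
      Fintype.card_fin, nsmul_eq_mul]
    field_simp
  -- feasibility transfers
  have hpstarPF : PartFeas I K L M Dm ptdf F pstar := (hfeq pstar).2 hstar.1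
  have hpssOF : OrigFeas I K L D ptdf F pss := (hfeq pss).1 hss.1
  set s1 : ℝ := ∑ i, (D i - ∑ k, pstar i k) ^ 2 with hs1
  set s2 : ℝ := ∑ i, (D i - ∑ k, pss i k) ^ 2 with hs2
  set t1 : ℝ := totalF I K c pstar with ht1
  set t2 : ℝ := totalF I K c pss with ht2
  -- inequality (E1): from optimality of pss in the partitioned problem
  have E1 : t2 + s2 / ((M : ℝ) * B) ≤ t1 + s1 / ((M : ℝ) * B) := by
    have h := hss.2 pstar hpstarPF
    have h2 := hlow pss
    rw [hpstarObj] at h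
    linarith
  -- inequality (E2): from optimality of pstar in the original problem
  have E2 : t1 + s1 / A ≤ t2 + s2 / A := by
    have h := hstar.2 pss hpssOF
    rw [horig pstar, horig pss] at h
    exact h
  rcases eq_or_lt_of_le hM with hM1' | hM2
  · -- M = 1 : the two problems coincide, so pstar = pss
    have hMeq : M = 1 := hM1'.symm
    subst hMeq
    have hAB : A = B := by rw [hA_def, hB_def]; norm_num
    have hone : ((1 : ℕ) : ℝ) * B = A := by rw [Nat.cast_one, one_mul, hAB]
    have hopt : ∀ p', PartFeas I K L 1 Dm ptdf F p' →
        PartObj I K 1 a c Dm pstar ≤ PartObj I K 1 a c Dm p' := by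
      intro p' hp'
      have h1 := hstar.2 p' ((hfeq p').1 hp')
      rw [horig pstar, horig p'] at h1
      have h2 := hlow p'
      rw [hone] at h2
      rw [hpstarObj, hone]
      linarith
    have hpe : pstar = pss := hssu pstar ⟨hpstarPF, hopt⟩
    rw [ht2, ht1, hpe]
  · -- M ≥ 2 : strict coefficient comparison
    have hM2' : (2 : ℝ) ≤ (M : ℝ) := by exact_mod_cast hM2
    have hMB : (0 : ℝ) < (M : ℝ) * B := by positivity
    have hAMB : A < (M : ℝ) * B := by
      rw [hA_def, hB_def]
      nlinarith
    have hs12 : s1 - s2 ≤ 0 := by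
      have h3 : (s1 - s2) / A ≤ (s1 - s2) / ((M : ℝ) * B) := by
        rw [sub_div, sub_div]
        linarith
      have h4 : (s1 - s2) * ((M : ℝ) * B) ≤ (s1 - s2) * A :=
        (div_le_div_iff₀ hA hMB).1 h3
      nlinarith
    have h5 : t2 - t1 ≤ (s1 - s2) / ((M : ℝ) * B) := by
      rw [sub_div]
      linarith
    have h6 : (s1 - s2) / ((M : ℝ) * B) ≤ 0 :=
      div_nonpos_iff.2 (Or.inr ⟨hs12, hMB.le⟩)
    linarith
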